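/- arXiv:0806.2984 — 5 statements merged into one kernel-verified Lean document; each statement's English description precedes it below -/
import Mathlib

section
/- Let ω > 0, γ, D_pp, D_qq, D_pq be real constants and let 𝓛 be the dual Lindbladian (with zero perturbation potential) acting on operators on C_c^∞(ℝ,ℂ). Then for every polynomial f with real coefficients and every u ∈ C_c^∞(ℝ,ℂ), 𝓛(f(p))u = [ −(ω²/2)(q f′(p) + f′(p) q) − 2γ p f′(p) + D_pp f″(p) ] u, where f(p) denotes the constant-coefficient differential operator obtained by substituting p for the variable of f. -/
open MeasureTheory Complex
open scoped ComplexOrder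

noncomputable section

/-- Operators acting on complex-valued functions on `ℝ`. -/
abbrev Op : Type := (ℝ → ℂ) → (ℝ → ℂ)

/-- The momentum operator `(p u)(x) = -i u'(x)`. -/
def pOp : Op := fun u x => -Complex.I * deriv u x

/-- The position operator `(q u)(x) = x * u(x)`. -/
def qOp : Op := fun u x => (x : ℂ) * u x

/-- Multiplication operator by a real-valued function. -/
def mulOp (f : ℝ → ℝ) : Op := fun u x => (f x : ℂ) * u x

/-- Commutator of two operators. -/
def opComm (A B : Op) : Op := fun u => A (B u) - B (A u)

/-- Anticommutator of two operators. -/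
def opACom (A B : Op) : Op := fun u => A (B u) + B (A u)

/-- The `L²(ℝ,ℂ)` inner product, antilinear in the first argument. -/
def ip (u v : ℝ → ℂ) : ℂ := ∫ x : ℝ, (starRingEnd ℂ) (u x) * v x

/-- `u ∈ C_c^∞(ℝ,ℂ)`: smooth and compactly supported. -/
def IsTest (u : ℝ → ℂ) : Prop := ContDiff ℝ (⊤ : ℕ∞) u ∧ HasCompactSupport u

/-- The dual Lindbladian (zero perturbation potential):
`𝓛(A) = (i/2)[p² + ω² q², A] + iγ{p,[q,A]} − D_qq [p,[p,A]] − D_pp [q,[q,A]] + 2 D_pq [q,[p,A]]`. -/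
def Lind (ω γ Dpp Dqq Dpq : ℝ) (A : Op) : Op :=
  (Complex.I / 2) • opComm (fun u => pOp (pOp u) + ((ω^2 : ℝ) : ℂ) • qOp (qOp u)) A
  + (Complex.I * (γ : ℂ)) • opACom pOp (opComm qOp A)
  - (Dqq : ℂ) • opComm pOp (opComm pOp A)
  - (Dpp : ℂ) • opComm qOp (opComm qOp A)
  + ((2 * Dpq : ℝ) : ℂ) • opComm qOp (opComm pOp A)

/-- `f(p)` for a real polynomial `f`: the constant-coefficient differential operator
obtained by substituting `p` for the variable of `f`. -/
def polyOp (f : Polynomial ℝ) : Op := fun u => f.sum fun k a => (a : ℂ) • pOp^[k] u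

/-!
On smooth functions `f(p)` commutes with `p`, and the canonical commutation relation
`q p = p q + i` gives `[q, f(p)] = i f'(p)` (by induction on monomials `p^n`). Every term of
`𝓛(f(p))` is a commutator that these two rules evaluate: the terms with `[p, f(p)]` vanish,
`[q², f(p)] = q [q, f(p)] + [q, f(p)] q = i (q f'(p) + f'(p) q)`, `{p, i f'(p)} = 2i p f'(p)` and
`[q, [q, f(p)]] = -f''(p)`.
-/

open Polynomial

variable {u v w : ℝ → ℂ}

lemma contDiff_pOp (hu : ContDiff ℝ (⊤ : ℕ∞) u) : ContDiff ℝ (⊤ : ℕ∞) (pOp u) :=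
  contDiff_const.mul (contDiff_infty_iff_deriv.mp hu).2

lemma contDiff_iterate_pOp (n : ℕ) (hu : ContDiff ℝ (⊤ : ℕ∞) u) :
    ContDiff ℝ (⊤ : ℕ∞) (pOp^[n] u) := by
  induction n with
  | zero => exact hu
  | succ n ih => rw [Function.iterate_succ_apply']; exact contDiff_pOp ih

lemma contDiff_qOp (hu : ContDiff ℝ (⊤ : ℕ∞) u) : ContDiff ℝ (⊤ : ℕ∞) (qOp u) :=
  ofRealCLM.contDiff.mul hu

lemma pOp_smul (c : ℂ) (v : ℝ → ℂ) : pOp (c • v) = c • pOp v := by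
  funext x
  simp only [pOp, deriv_const_smul_field, Pi.smul_apply, smul_eq_mul]
  ring

lemma pOp_add (hv : Differentiable ℝ v) (hw : Differentiable ℝ w) :
    pOp (v + w) = pOp v + pOp w := by
  funext x
  simp only [pOp, deriv_add (hv x) (hw x), Pi.add_apply]
  ring

lemma pOp_zero : pOp 0 = 0 := by
  simpa using pOp_smul 0 0

lemma qOp_smul (c : ℂ) (v : ℝ → ℂ) : qOp (c • v) = c • qOp v := by
  funext x
  simp only [qOp, Pi.smul_apply, smul_eq_mul]
  ring

lemma qOp_add (v w : ℝ → ℂ) : qOp (v + w) = qOp v + qOp w := by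
  funext x
  simp only [qOp, Pi.add_apply]
  ring

lemma qOp_zero : qOp 0 = 0 := by
  simpa using qOp_smul 0 0

lemma iterate_pOp_smul (n : ℕ) (c : ℂ) (v : ℝ → ℂ) : pOp^[n] (c • v) = c • pOp^[n] v := by
  induction n with
  | zero => rfl
  | succ n ih => rw [Function.iterate_succ_apply', ih, pOp_smul, Function.iterate_succ_apply']

lemma iterate_pOp_add (n : ℕ) (hv : ContDiff ℝ (⊤ : ℕ∞) v) (hw : ContDiff ℝ (⊤ : ℕ∞) w) :
    pOp^[n] (v + w) = pOp^[n] v + pOp^[n] w := by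
  induction n with
  | zero => rfl
  | succ n ih =>
    rw [Function.iterate_succ_apply', ih,
      pOp_add ((contDiff_iterate_pOp n hv).differentiable (by simp))
        ((contDiff_iterate_pOp n hw).differentiable (by simp)),
      Function.iterate_succ_apply', Function.iterate_succ_apply']

lemma qOp_pOp (hu : Differentiable ℝ u) : qOp (pOp u) = pOp (qOp u) + I • u := by
  funext x
  have hx : HasDerivAt (fun y : ℝ => (y : ℂ)) 1 x := by
    simpa using (hasDerivAt_id x).ofReal_comp
  have hqu : HasDerivAt (qOp u) (1 * u x + x * deriv u x) x := hx.mul (hu x).hasDerivAt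
  simp only [qOp, pOp, Pi.add_apply, Pi.smul_apply, smul_eq_mul, hqu.deriv]
  ring

lemma qOp_iterate_pOp_succ (n : ℕ) (hu : ContDiff ℝ (⊤ : ℕ∞) u) :
    qOp (pOp^[n + 1] u) = pOp^[n + 1] (qOp u) + (I * (n + 1)) • pOp^[n] u := by
  have hdiff {v : ℝ → ℂ} (hv : ContDiff ℝ (⊤ : ℕ∞) v) : Differentiable ℝ v :=
    hv.differentiable (by simp)
  induction n with
  | zero => simpa using qOp_pOp (hdiff hu)
  | succ n ih =>
    rw [Function.iterate_succ_apply' _ (n + 1), qOp_pOp (hdiff (contDiff_iterate_pOp _ hu)), ih,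
      pOp_add (w := (I * (n + 1)) • pOp^[n] u)
        (hdiff (contDiff_iterate_pOp _ (contDiff_qOp hu)))
        (hdiff ((contDiff_iterate_pOp n hu).const_smul (I * (n + 1)))),
      pOp_smul, ← Function.iterate_succ_apply' pOp, ← Function.iterate_succ_apply' pOp]
    push_cast
    module

lemma polyOp_add_left (f g : Polynomial ℝ) (v : ℝ → ℂ) :
    polyOp (f + g) v = polyOp f v + polyOp g v :=
  Polynomial.sum_add_index f g _ (fun _ => by simp) fun _ a b => by push_cast; rw [add_smul]

lemma polyOp_monomial (n : ℕ) (a : ℝ) (v : ℝ → ℂ) :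
    polyOp (monomial n a) v = (a : ℂ) • pOp^[n] v :=
  Polynomial.sum_monomial_index a _ (by simp)

lemma polyOp_zero_left (v : ℝ → ℂ) : polyOp 0 v = 0 :=
  Polynomial.sum_zero_index _

lemma contDiff_polyOp (f : Polynomial ℝ) (hu : ContDiff ℝ (⊤ : ℕ∞) u) :
    ContDiff ℝ (⊤ : ℕ∞) (polyOp f u) := by
  induction f using Polynomial.induction_on' with
  | add f g hf hg => rw [polyOp_add_left]; exact hf.add hg
  | monomial n a => rw [polyOp_monomial]; exact (contDiff_iterate_pOp n hu).const_smul (a : ℂ)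

lemma polyOp_smul (f : Polynomial ℝ) (c : ℂ) (v : ℝ → ℂ) :
    polyOp f (c • v) = c • polyOp f v := by
  induction f using Polynomial.induction_on' with
  | add f g hf hg => rw [polyOp_add_left, polyOp_add_left, hf, hg, smul_add]
  | monomial n a => rw [polyOp_monomial, polyOp_monomial, iterate_pOp_smul, smul_comm]

lemma polyOp_add (f : Polynomial ℝ) (hv : ContDiff ℝ (⊤ : ℕ∞) v) (hw : ContDiff ℝ (⊤ : ℕ∞) w) :
    polyOp f (v + w) = polyOp f v + polyOp f w := by
  induction f using Polynomial.induction_on' with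
  | add f g hf hg => rw [polyOp_add_left, polyOp_add_left, polyOp_add_left, hf, hg]; abel
  | monomial n a => rw [polyOp_monomial, polyOp_monomial, polyOp_monomial,
      iterate_pOp_add n hv hw, smul_add]

lemma pOp_polyOp (f : Polynomial ℝ) (hu : ContDiff ℝ (⊤ : ℕ∞) u) :
    pOp (polyOp f u) = polyOp f (pOp u) := by
  induction f using Polynomial.induction_on' with
  | add f g hf hg =>
    rw [polyOp_add_left, polyOp_add_left, pOp_add ((contDiff_polyOp f hu).differentiable (by simp))
      ((contDiff_polyOp g hu).differentiable (by simp)), hf, hg]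
  | monomial n a => rw [polyOp_monomial, polyOp_monomial, pOp_smul,
      ← Function.iterate_succ_apply' pOp, Function.iterate_succ_apply]

lemma qOp_polyOp (f : Polynomial ℝ) (hu : ContDiff ℝ (⊤ : ℕ∞) u) :
    qOp (polyOp f u) = polyOp f (qOp u) + I • polyOp (derivative f) u := by
  induction f using Polynomial.induction_on' with
  | add f g hf hg =>
    rw [polyOp_add_left, qOp_add, hf, hg, derivative_add, polyOp_add_left, polyOp_add_left,
      smul_add]
    abel
  | monomial n a =>
    cases n with
    | zero =>
      rw [polyOp_monomial, polyOp_monomial, derivative_monomial, qOp_smul]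
      simp [polyOp_zero_left]
    | succ n =>
      rw [polyOp_monomial, polyOp_monomial, qOp_smul, qOp_iterate_pOp_succ n hu,
        derivative_monomial, Nat.add_sub_cancel, polyOp_monomial]
      push_cast
      module

lemma opComm_pOp_polyOp (f : Polynomial ℝ) (hu : ContDiff ℝ (⊤ : ℕ∞) u) :
    opComm pOp (polyOp f) u = 0 :=
  sub_eq_zero.mpr (pOp_polyOp f hu)

lemma opComm_qOp_polyOp (f : Polynomial ℝ) (hu : ContDiff ℝ (⊤ : ℕ∞) u) :
    opComm qOp (polyOp f) u = I • polyOp (derivative f) u := by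
  rw [opComm, qOp_polyOp f hu, add_sub_cancel_left]

lemma opComm_pOp_opComm_pOp_polyOp (f : Polynomial ℝ) (hu : ContDiff ℝ (⊤ : ℕ∞) u) :
    opComm pOp (opComm pOp (polyOp f)) u = 0 := by
  rw [opComm, opComm_pOp_polyOp f hu, opComm_pOp_polyOp f (contDiff_pOp hu), pOp_zero, sub_zero]

lemma opComm_qOp_opComm_pOp_polyOp (f : Polynomial ℝ) (hu : ContDiff ℝ (⊤ : ℕ∞) u) :
    opComm qOp (opComm pOp (polyOp f)) u = 0 := by
  rw [opComm, opComm_pOp_polyOp f hu, opComm_pOp_polyOp f (contDiff_qOp hu), qOp_zero, sub_zero]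

lemma opComm_qOp_opComm_qOp_polyOp (f : Polynomial ℝ) (hu : ContDiff ℝ (⊤ : ℕ∞) u) :
    opComm qOp (opComm qOp (polyOp f)) u = -polyOp (derivative (derivative f)) u := by
  rw [opComm, opComm_qOp_polyOp f hu, opComm_qOp_polyOp f (contDiff_qOp hu), qOp_smul,
    qOp_polyOp _ hu, smul_add, add_sub_cancel_left, smul_smul, I_mul_I, neg_one_smul]

lemma opACom_pOp_opComm_qOp_polyOp (f : Polynomial ℝ) (hu : ContDiff ℝ (⊤ : ℕ∞) u) :
    opACom pOp (opComm qOp (polyOp f)) u = (2 * I) • pOp (polyOp (derivative f) u) := by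
  rw [opACom, opComm_qOp_polyOp f hu, opComm_qOp_polyOp f (contDiff_pOp hu), pOp_smul,
    ← pOp_polyOp _ hu]
  module

lemma opComm_hamiltonian_polyOp (c : ℂ) (f : Polynomial ℝ) (hu : ContDiff ℝ (⊤ : ℕ∞) u) :
    opComm (fun v => pOp (pOp v) + c • qOp (qOp v)) (polyOp f) u =
      (c * I) • (qOp (polyOp (derivative f) u) + polyOp (derivative f) (qOp u)) := by
  rw [opComm, polyOp_add (w := c • qOp (qOp u)) f (contDiff_pOp (contDiff_pOp hu))
      ((contDiff_qOp (contDiff_qOp hu)).const_smul c), polyOp_smul,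
    pOp_polyOp f hu, pOp_polyOp f (contDiff_pOp hu), qOp_polyOp f hu, qOp_add, qOp_smul,
    qOp_polyOp f (contDiff_qOp hu)]
  module

theorem Lind_of_poly_p_general (ω γ Dpp Dqq Dpq : ℝ) (f : Polynomial ℝ)
    (u : ℝ → ℂ) (hu : IsTest u) :
    Lind ω γ Dpp Dqq Dpq (polyOp f) u =
      (((-(ω^2/2) : ℝ) : ℂ) • (qOp ∘ polyOp (Polynomial.derivative f)
          + polyOp (Polynomial.derivative f) ∘ qOp)
        + ((-(2*γ) : ℝ) : ℂ) • (pOp ∘ polyOp (Polynomial.derivative f))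
        + (Dpp : ℂ) • polyOp (Polynomial.derivative (Polynomial.derivative f))) u := by
  obtain ⟨hu, -⟩ := hu
  simp only [Lind, Pi.add_apply, Pi.sub_apply, Pi.smul_apply, Function.comp_apply,
    opComm_hamiltonian_polyOp _ f hu, opACom_pOp_opComm_qOp_polyOp f hu,
    opComm_pOp_opComm_pOp_polyOp f hu, opComm_qOp_opComm_qOp_polyOp f hu,
    opComm_qOp_opComm_pOp_polyOp f hu]
  match_scalars <;> ring_nf <;> simp only [I_sq] <;> ring

/-- `𝓛(f(p)) = −(ω²/2)(q f′(p) + f′(p) q) − 2γ p f′(p) + D_pp f″(p)`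
on `C_c^∞(ℝ,ℂ)`. -/
theorem Lind_of_poly_p (ω γ Dpp Dqq Dpq : ℝ) (hω : 0 < ω) (f : Polynomial ℝ)
    (u : ℝ → ℂ) (hu : IsTest u) :
    Lind ω γ Dpp Dqq Dpq (polyOp f) u =
      (((-(ω^2/2) : ℝ) : ℂ) • (qOp ∘ polyOp (Polynomial.derivative f)
          + polyOp (Polynomial.derivative f) ∘ qOp)
        + ((-(2*γ) : ℝ) : ℂ) • (pOp ∘ polyOp (Polynomial.derivative f))
        + (Dpp : ℂ) • polyOp (Polynomial.derivative (Polynomial.derivative f))) u :=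
  Lind_of_poly_p_general ω γ Dpp Dqq Dpq f u hu
end
end

section
/- Let r, s > 0 be real numbers with rs > 1. Then for every nonzero u ∈ C_c^∞(ℝ,ℂ), both ⟨u, (r p² − (pq + qp) + s q²) u⟩ > 0 and ⟨u, (r p² + (pq + qp) + s q²) u⟩ > 0; i.e. the quadratic forms of the operators r p² ∓ (pq+qp) + s q² are strictly positive on C_c^∞(ℝ,ℂ). -/
open MeasureTheory Complex
open scoped ComplexOrder

noncomputable section

/-! On test functions `p` and `q` are symmetric (for `p` by integration by parts), so with
`a = p u` and `b = q u` the form of `r p² + c (pq + qp) + s q²` is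
`∫ r |a|² + 2 c Re (ā b) + s |b|²`. For `|c| ≤ 1`, completing the square bounds the integrand
below by `(r - 1/s) |a|²`, where `r - 1/s > 0` because `rs > 1`; and `p u ≠ 0`, since a nonzero
compactly supported function is not constant. -/

open ComplexConjugate

variable {u v w : ℝ → ℂ}

lemma IsTest.pOp (hu : IsTest u) : IsTest (pOp u) :=
  ⟨contDiff_const.mul (contDiff_infty_iff_deriv.mp hu.1).2, hu.2.deriv.mul_left⟩

lemma IsTest.qOp (hu : IsTest u) : IsTest (qOp u) :=
  ⟨ofRealCLM.contDiff.mul hu.1, hu.2.mul_left⟩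

lemma IsTest.continuous (hu : IsTest u) : Continuous u := hu.1.continuous

lemma HasCompactSupport.integrable_conj_mul (hc : HasCompactSupport u) (hu : Continuous u)
    (hv : Continuous v) : Integrable fun x => conj (u x) * v x :=
  ((continuous_conj.comp hu).mul hv).integrable_of_hasCompactSupport
    (hc.comp_left (map_zero conj)).mul_right

lemma ip_add_right (hc : HasCompactSupport u) (hu : Continuous u) (hv : Continuous v)
    (hw : Continuous w) : ip u (v + w) = ip u v + ip u w := by
  simp only [ip, Pi.add_apply, mul_add]
  exact integral_add (hc.integrable_conj_mul hu hv) (hc.integrable_conj_mul hu hw)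

lemma ip_smul_right (c : ℂ) (u v : ℝ → ℂ) : ip u (c • v) = c * ip u v := by
  simp only [ip, Pi.smul_apply, smul_eq_mul, mul_left_comm _ c, integral_const_mul]

lemma ip_qOp (u v : ℝ → ℂ) : ip u (qOp v) = ip (qOp u) v := by
  simp only [ip, qOp, map_mul, conj_ofReal, mul_assoc, mul_left_comm]

lemma ip_pOp (hu : ContDiff ℝ 1 u) (hc : HasCompactSupport u) (hv : ContDiff ℝ 1 v) :
    ip u (pOp v) = ip (pOp u) v := by
  have hu' := hu.continuous_deriv le_rfl
  have hv' := hv.continuous_deriv le_rfl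
  have parts : ∫ x, conj (u x) * deriv v x = -∫ x, conj (deriv u x) * v x :=
    integral_mul_deriv_eq_deriv_mul_of_integrable
      (fun x _ => ((hu.differentiable one_ne_zero x).hasDerivAt).star)
      (fun x _ => (hv.differentiable one_ne_zero x).hasDerivAt)
      (hc.integrable_conj_mul hu.continuous hv') (hc.deriv.integrable_conj_mul hu' hv.continuous)
      (hc.integrable_conj_mul hu.continuous hv.continuous)
  simp only [ip, pOp, map_mul, map_neg, conj_I, mul_left_comm _ (-I), neg_neg, mul_assoc,
    integral_const_mul, parts]
  ring

lemma HasCompactSupport.exists_deriv_ne_zero {E : Type*} [NormedAddCommGroup E] [NormedSpace ℝ E]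
    {f : ℝ → E} (hc : HasCompactSupport f) (hf : Differentiable ℝ f) (hf0 : f ≠ 0) :
    ∃ x, deriv f x ≠ 0 := by
  by_contra! hf'
  obtain ⟨y, hy⟩ := (Set.ne_univ_iff_exists_notMem _).mp hc.isCompact.ne_univ
  exact hf0 (funext fun x => (is_const_of_deriv_eq_zero hf hf' x y).trans
    (image_eq_zero_of_notMem_tsupport hy))

def quadForm (r c s : ℝ) (a b : ℂ) : ℝ := r * ‖a‖ ^ 2 + 2 * c * (conj a * b).re + s * ‖b‖ ^ 2

lemma ofReal_quadForm (r c s : ℝ) (a b : ℂ) :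
    (quadForm r c s a b : ℂ) =
      r * (conj a * a) + c * (conj a * b + conj b * a) + s * (conj b * b) := by
  apply Complex.ext <;> simp [quadForm, Complex.sq_norm, Complex.normSq_apply] <;> ring

lemma sub_inv_mul_sq_le_quadForm {r c s : ℝ} (hs : 0 < s) (hc : |c| ≤ 1) (a b : ℂ) :
    (r - s⁻¹) * ‖a‖ ^ 2 ≤ quadForm r c s a b := by
  have hcross : |2 * c * (conj a * b).re| ≤ 2 * (‖a‖ * ‖b‖) := by
    rw [abs_mul, abs_mul, abs_two, ← norm_conj a, ← norm_mul]
    have := abs_re_le_norm (conj a * b)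
    have := abs_nonneg (conj a * b).re
    nlinarith
  have hsquare : 0 ≤ (s * ‖b‖ - ‖a‖) ^ 2 / s := by positivity
  have hexpand : (s * ‖b‖ - ‖a‖) ^ 2 / s = s * ‖b‖ ^ 2 - 2 * (‖a‖ * ‖b‖) + s⁻¹ * ‖a‖ ^ 2 := by
    field_simp; ring
  unfold quadForm
  linarith [neg_abs_le (2 * c * (conj a * b).re)]

lemma ip_quadratic_eq_integral_quadForm (hu : IsTest u) (r c s : ℝ) :
    ip u (((r : ℂ) • (pOp ∘ pOp) + (c : ℂ) • opACom pOp qOp + (s : ℂ) • (qOp ∘ qOp)) u) =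
      ((∫ x, quadForm r c s (pOp u x) (qOp u x) : ℝ) : ℂ) := by
  have ha := hu.pOp
  have hb := hu.qOp
  have c1 := ha.pOp.continuous
  have c2 := hb.pOp.continuous
  have c3 := ha.qOp.continuous
  have c4 := hb.qOp.continuous
  have hC1 {f : ℝ → ℂ} (hf : IsTest f) : ContDiff ℝ 1 f := hf.1.of_le (by exact_mod_cast le_top)
  have hint {f g : ℝ → ℂ} (hf : IsTest f) (hg : IsTest g) :=
    hf.2.integrable_conj_mul hf.continuous hg.continuous
  calc ip u ((r : ℂ) • pOp (pOp u) + (c : ℂ) • (pOp (qOp u) + qOp (pOp u))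
          + (s : ℂ) • qOp (qOp u))
      = r * ip (pOp u) (pOp u) + c * (ip (pOp u) (qOp u) + ip (qOp u) (pOp u))
          + s * ip (qOp u) (qOp u) := by
        rw [ip_add_right hu.2 hu.continuous (by fun_prop) (by fun_prop),
          ip_add_right hu.2 hu.continuous (by fun_prop) (by fun_prop),
          ip_smul_right, ip_smul_right, ip_smul_right, ip_add_right hu.2 hu.continuous c2 c3,
          ip_pOp (hC1 hu) hu.2 (hC1 ha), ip_pOp (hC1 hu) hu.2 (hC1 hb),
          ip_qOp u (pOp u), ip_qOp u (qOp u)]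
    _ = ∫ x, (quadForm r c s (pOp u x) (qOp u x) : ℂ) := by
        have haa := hint ha ha
        have hab := hint ha hb
        have hba := hint hb ha
        have hbb := hint hb hb
        simp only [ofReal_quadForm]
        rw [integral_add ?_ (hbb.const_mul _), integral_add (haa.const_mul _) ?_,
          integral_const_mul, integral_const_mul, integral_const_mul, integral_add hab hba]
        · rfl
        · exact (hab.add hba).const_mul _
        · exact (haa.const_mul _).add ((hab.add hba).const_mul _)
    _ = _ := integral_ofReal

lemma integrable_quadForm {a b : ℝ → ℂ} (ha : IsTest a) (hb : IsTest b) (r c s : ℝ) :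
    Integrable fun x => quadForm r c s (a x) (b x) := by
  have hca := ha.continuous
  have hcb := hb.continuous
  exact Continuous.integrable_of_hasCompactSupport (by unfold quadForm; fun_prop)
    (ha.2.comp₂_left hb.2 (by simp [quadForm]))

lemma integral_norm_pOp_sq_pos (hu : IsTest u) (hu0 : u ≠ 0) : 0 < ∫ x, ‖pOp u x‖ ^ 2 := by
  obtain ⟨x, hx⟩ := hu.2.exists_deriv_ne_zero (hu.1.differentiable (by simp)) hu0
  refine (hu.pOp.continuous.norm.pow 2).integral_pos_of_hasCompactSupport_nonneg_nonzero
    (hu.pOp.2.comp_left (g := fun z => ‖z‖ ^ 2) (by simp)) (fun _ => by positivity) (x := x) ?_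
  simpa [pOp] using hx

lemma ip_quadratic_pos {r c s : ℝ} (hs : 0 < s) (hrs : 1 < r * s) (hc : |c| ≤ 1) (hu : IsTest u)
    (hu0 : u ≠ 0) :
    0 < ip u (((r : ℂ) • (pOp ∘ pOp) + (c : ℂ) • opACom pOp qOp + (s : ℂ) • (qOp ∘ qOp)) u) := by
  rw [ip_quadratic_eq_integral_quadForm hu, zero_lt_real]
  have hgap : 0 < r - s⁻¹ := by
    rw [sub_pos, inv_lt_iff_one_lt_mul₀ hs]; linarith
  calc 0 < (r - s⁻¹) * ∫ x, ‖pOp u x‖ ^ 2 := mul_pos hgap (integral_norm_pOp_sq_pos hu hu0)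
    _ = ∫ x, (r - s⁻¹) * ‖pOp u x‖ ^ 2 := (integral_const_mul _ _).symm
    _ ≤ ∫ x, quadForm r c s (pOp u x) (qOp u x) :=
      integral_mono_of_nonneg (.of_forall fun _ => by positivity)
        (integrable_quadForm hu.pOp hu.qOp r c s)
        (.of_forall fun _ => sub_inv_mul_sq_le_quadForm hs hc _ _)

theorem quadratic_form_strictly_positive_general (r s : ℝ) (hs : 0 < s)
    (hrs : 1 < r * s) (u : ℝ → ℂ) (hu : IsTest u) (hu0 : u ≠ 0) :
    0 < ip u (((r : ℂ) • (pOp ∘ pOp) - opACom pOp qOp + (s : ℂ) • (qOp ∘ qOp)) u)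
    ∧ 0 < ip u (((r : ℂ) • (pOp ∘ pOp) + opACom pOp qOp + (s : ℂ) • (qOp ∘ qOp)) u) := by
  constructor
  · simpa only [ofReal_neg, ofReal_one, neg_smul, one_smul, ← sub_eq_add_neg] using
      ip_quadratic_pos hs hrs (c := -1) (by simp) hu hu0
  · simpa only [ofReal_one, one_smul] using ip_quadratic_pos hs hrs (c := 1) (by simp) hu hu0

/-- for `r, s > 0` with `rs > 1` the quadratic forms of
`r p² ∓ (pq+qp) + s q²` are strictly positive on `C_c^∞(ℝ,ℂ)` (complex order on `ℂ`). -/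
theorem quadratic_form_strictly_positive (r s : ℝ) (hr : 0 < r) (hs : 0 < s)
    (hrs : 1 < r * s) (u : ℝ → ℂ) (hu : IsTest u) (hu0 : u ≠ 0) :
    0 < ip u (((r : ℂ) • (pOp ∘ pOp) - opACom pOp qOp + (s : ℂ) • (qOp ∘ qOp)) u)
    ∧ 0 < ip u (((r : ℂ) • (pOp ∘ pOp) + opACom pOp qOp + (s : ℂ) • (qOp ∘ qOp)) u) :=
  quadratic_form_strictly_positive_general r s hs hrs u hu hu0
end
end

section
/- Let ω > 0, γ, D_pp, D_qq, D_pq, r, s be real, let V : ℝ → ℝ be smooth, and let 𝓛 be the dual Lindbladian with potential V. Set X = r p² + (pq + qp) + s q². Then, as operators on C_c^∞(ℝ,ℂ): 𝓛(X) = −2(2γ r − 1) p² − 2 ω² q² + (s − 2γ − ω² r)(pq + qp) − r ( p V′(q) + V′(q) p ) − 2 q V′(q) + ( 2 r D_pp + 4 D_pq + 2 s D_qq ). -/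
open MeasureTheory Complex
open scoped ComplexOrder

noncomputable section

/-- `X = r p² + (pq + qp) + s q²`. -/
def Xop (r s : ℝ) : Op := (r : ℂ) • (pOp ∘ pOp) + opACom pOp qOp + (s : ℂ) • (qOp ∘ qOp)

/-- The dual Lindbladian with perturbation potential `V`:
`𝓛_V(A) = (i/2)[p² + ω² q² + 2V(q), A] + iγ{p,[q,A]} − D_qq[p,[p,A]] − D_pp[q,[q,A]] + 2D_pq[q,[p,A]]`. -/
def LindV (ω γ Dpp Dqq Dpq : ℝ) (V : ℝ → ℝ) (A : Op) : Op :=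
  Lind ω γ Dpp Dqq Dpq A + Complex.I • opComm (mulOp V) A

/-! On smooth functions, `p`, `q` and `V(q)` are ℂ-linear endomorphisms with `[q, p] = i`,
`[V(q), p] = i V′(q)` and `[V(q), q] = [V′(q), q] = 0` (on all of `ℝ → ℂ` they are not: `deriv`
is not additive off differentiable functions). The identity then holds in any associative
ℂ-algebra with such elements: expanding the commutators and normal-ordering every word with these
relations reduces both sides to the same combination of `p²`, `q²`, `pq + qp`, `pV′ + V′p`, `qV′`
and `1`. -/

section CCR

variable {A : Type*} [Ring A] [Algebra ℂ A]

def dualLindbladian (ω γ Dpp Dqq Dpq : ℝ) (P Q W X : A) : A :=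
  (I / 2) • ⁅P * P + ((ω ^ 2 : ℝ) : ℂ) • (Q * Q), X⁆ + (I * (γ : ℂ)) • (P * ⁅Q, X⁆ + ⁅Q, X⁆ * P)
  - (Dqq : ℂ) • ⁅P, ⁅P, X⁆⁆ - (Dpp : ℂ) • ⁅Q, ⁅Q, X⁆⁆ + ((2 * Dpq : ℝ) : ℂ) • ⁅Q, ⁅P, X⁆⁆
  + I • ⁅W, X⁆

omit [Algebra ℂ A] in
theorem mul_eq_mul_add_of_lie_eq {a b c : A} (h : ⁅a, b⁆ = c) : a * b = b * a + c := by
  rw [← h, Ring.lie_def]; abel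

omit [Algebra ℂ A] in
theorem mul_mul_eq_mul_mul_add_of_lie_eq {a b c : A} (h : ⁅a, b⁆ = c) (x : A) :
    a * (b * x) = b * (a * x) + c * x := by
  rw [← mul_assoc, mul_eq_mul_add_of_lie_eq h, add_mul, mul_assoc]

theorem dualLindbladian_quadratic {P Q W W' : A} (hQP : ⁅Q, P⁆ = I • 1) (hWP : ⁅W, P⁆ = I • W')
    (hWQ : ⁅W, Q⁆ = 0) (hW'Q : ⁅W', Q⁆ = 0) (ω γ Dpp Dqq Dpq r s : ℝ) :
    dualLindbladian ω γ Dpp Dqq Dpq P Q W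
        ((r : ℂ) • (P * P) + (P * Q + Q * P) + (s : ℂ) • (Q * Q)) =
      ((-2*(2*γ*r - 1) : ℝ) : ℂ) • (P * P) + ((-2*ω^2 : ℝ) : ℂ) • (Q * Q)
      + ((s - 2*γ - ω^2*r : ℝ) : ℂ) • (P * Q + Q * P) + (-(r : ℂ)) • (P * W' + W' * P)
      + ((-2 : ℝ) : ℂ) • (Q * W') + ((2*r*Dpp + 4*Dpq + 2*s*Dqq : ℝ) : ℂ) • 1 := by
  -- normal order: `P` left of `Q`, and `P`, `Q` left of `W`, `W'`
  simp only [dualLindbladian, Ring.lie_def, mul_add, add_mul, mul_sub, sub_mul, mul_smul_comm,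
    smul_mul_assoc, mul_assoc, one_mul, mul_one, smul_add, smul_sub,
    mul_eq_mul_add_of_lie_eq hQP, mul_mul_eq_mul_mul_add_of_lie_eq hQP,
    mul_eq_mul_add_of_lie_eq hWP, mul_mul_eq_mul_mul_add_of_lie_eq hWP,
    mul_eq_mul_add_of_lie_eq hWQ, mul_mul_eq_mul_mul_add_of_lie_eq hWQ,
    mul_eq_mul_add_of_lie_eq hW'Q, add_zero, zero_mul]
  match_scalars <;> grind [I_sq]

end CCR

def smoothFns : Submodule ℂ (ℝ → ℂ) where
  carrier := {u | ContDiff ℝ (⊤ : ℕ∞) u}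
  add_mem' {_ _} (hu : ContDiff ℝ (⊤ : ℕ∞) _) (hv : ContDiff ℝ (⊤ : ℕ∞) _) := hu.add hv
  zero_mem' := (contDiff_const : ContDiff ℝ (⊤ : ℕ∞) fun _ => (0 : ℂ))
  smul_mem' c _ (hu : ContDiff ℝ (⊤ : ℕ∞) _) := hu.const_smul c

namespace smoothFns

theorem contDiff (u : smoothFns) : ContDiff ℝ (⊤ : ℕ∞) (u : ℝ → ℂ) := u.2

theorem differentiable (u : smoothFns) : Differentiable ℝ (u : ℝ → ℂ) :=
  (contDiff u).differentiable (by simp)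

def momentum : Module.End ℂ smoothFns where
  toFun u := ⟨pOp u, ((contDiff_infty_iff_deriv.1 (contDiff u)).2).const_smul (-I)⟩
  map_add' u v := by
    ext x
    simp [pOp, deriv_add (differentiable u x) (differentiable v x), mul_add]
  map_smul' c u := by
    ext x
    simp [pOp, deriv_const_smul c (differentiable u x), mul_left_comm]

def mulEnd (f : ℝ → ℝ) (hf : ContDiff ℝ (⊤ : ℕ∞) f) : Module.End ℂ smoothFns where
  toFun u := ⟨mulOp f u, ((ofRealCLM.contDiff.comp hf).mul (contDiff u) :)⟩
  map_add' u v := by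
    ext x
    simp [mulOp, mul_add]
  map_smul' c u := by
    ext x
    simp [mulOp, mul_left_comm]

abbrev position : Module.End ℂ smoothFns := mulEnd id contDiff_id

theorem mulEnd_lie_mulEnd {f g : ℝ → ℝ} (hf : ContDiff ℝ (⊤ : ℕ∞) f)
    (hg : ContDiff ℝ (⊤ : ℕ∞) g) : ⁅mulEnd f hf, mulEnd g hg⁆ = 0 := by
  ext u x
  simp [Ring.lie_def, mulEnd, mulOp, mul_left_comm]

theorem hasDerivAt_mulOp {f : ℝ → ℝ} {u : ℝ → ℂ} {f' : ℝ} {u' : ℂ} {x : ℝ}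
    (hf : HasDerivAt f f' x) (hu : HasDerivAt u u' x) :
    HasDerivAt (mulOp f u) (f' * u x + f x * u') x :=
  hf.ofReal_comp.mul hu

theorem mulEnd_lie_momentum {f : ℝ → ℝ} (hf : ContDiff ℝ (⊤ : ℕ∞) f) :
    ⁅mulEnd f hf, momentum⁆ = I • mulEnd (deriv f) (contDiff_infty_iff_deriv.1 hf).2 := by
  ext u x
  have hfu := hasDerivAt_mulOp ((hf.differentiable (by simp)) x).hasDerivAt
    (differentiable u x).hasDerivAt
  simp [Ring.lie_def, mulEnd, momentum, mulOp, pOp, hfu.deriv]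
  ring

theorem position_lie_momentum : ⁅position, momentum⁆ = I • 1 := by
  rw [mulEnd_lie_momentum]
  congr
  ext u x
  simp [mulEnd, mulOp]

def Realizes (A : Op) (T : Module.End ℂ smoothFns) : Prop :=
  ∀ u : smoothFns, A u = T u

namespace Realizes

variable {A B : Op} {T U : Module.End ℂ smoothFns}

theorem add (hA : Realizes A T) (hB : Realizes B U) : Realizes (A + B) (T + U) := fun u => by
  simp [hA u, hB u]

theorem sub (hA : Realizes A T) (hB : Realizes B U) : Realizes (A - B) (T - U) := fun u => by
  simp [hA u, hB u]

theorem smul (c : ℂ) (hA : Realizes A T) : Realizes (c • A) (c • T) := fun u => by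
  simp [hA u]

theorem comp (hA : Realizes A T) (hB : Realizes B U) : Realizes (A ∘ B) (T * U) := fun u => by
  simp [hB u, hA (U u)]

theorem opComm (hA : Realizes A T) (hB : Realizes B U) : Realizes (opComm A B) ⁅T, U⁆ :=
  (hA.comp hB).sub (hB.comp hA)

theorem opACom (hA : Realizes A T) (hB : Realizes B U) : Realizes (opACom A B) (T * U + U * T) :=
  (hA.comp hB).add (hB.comp hA)

end Realizes

theorem realizes_pOp : Realizes pOp momentum := fun _ => rfl

theorem realizes_qOp : Realizes qOp position := fun _ => rfl

theorem realizes_mulOp {f : ℝ → ℝ} (hf : ContDiff ℝ (⊤ : ℕ∞) f) :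
    Realizes (mulOp f) (mulEnd f hf) :=
  fun _ => rfl

theorem realizes_Xop (r s : ℝ) :
    Realizes (Xop r s) ((r : ℂ) • (momentum * momentum)
      + (momentum * position + position * momentum) + (s : ℂ) • (position * position)) :=
  (((realizes_pOp.comp realizes_pOp).smul _).add (realizes_pOp.opACom realizes_qOp)).add
    ((realizes_qOp.comp realizes_qOp).smul _)

theorem realizes_lindV (ω γ Dpp Dqq Dpq : ℝ) {V : ℝ → ℝ} (hV : ContDiff ℝ (⊤ : ℕ∞) V)
    {A : Op} {T : Module.End ℂ smoothFns} (hA : Realizes A T) :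
    Realizes (LindV ω γ Dpp Dqq Dpq V A)
      (dualLindbladian ω γ Dpp Dqq Dpq momentum position (mulEnd V hV) T) := by
  have hH : Realizes (fun u => pOp (pOp u) + ((ω ^ 2 : ℝ) : ℂ) • qOp (qOp u))
      (momentum * momentum + ((ω ^ 2 : ℝ) : ℂ) • (position * position)) :=
    (realizes_pOp.comp realizes_pOp).add ((realizes_qOp.comp realizes_qOp).smul _)
  have hQA := realizes_qOp.opComm hA
  have hPA := realizes_pOp.opComm hA
  exact ((((((hH.opComm hA).smul _).add ((realizes_pOp.opACom hQA).smul _)).sub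
    ((realizes_pOp.opComm hPA).smul _)).sub ((realizes_qOp.opComm hQA).smul _)).add
    ((realizes_qOp.opComm hPA).smul _)).add (((realizes_mulOp hV).opComm hA).smul _)

end smoothFns

theorem LindV_of_X_general (ω γ Dpp Dqq Dpq r s : ℝ)
    (V : ℝ → ℝ) (hV : ContDiff ℝ (⊤ : ℕ∞) V)
    (u : ℝ → ℂ) (hu : IsTest u) :
    LindV ω γ Dpp Dqq Dpq V (Xop r s) u =
      ((-2*(2*γ*r - 1) : ℝ) : ℂ) • pOp (pOp u)
      + ((-2*ω^2 : ℝ) : ℂ) • qOp (qOp u)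
      + ((s - 2*γ - ω^2*r : ℝ) : ℂ) • opACom pOp qOp u
      + (-(r : ℂ)) • (pOp (mulOp (deriv V) u) + mulOp (deriv V) (pOp u))
      + ((-2 : ℝ) : ℂ) • qOp (mulOp (deriv V) u)
      + ((2*r*Dpp + 4*Dpq + 2*s*Dqq : ℝ) : ℂ) • u := by
  open smoothFns in
  rw [realizes_lindV ω γ Dpp Dqq Dpq hV (realizes_Xop r s) ⟨u, hu.1⟩,
    dualLindbladian_quadratic position_lie_momentum (mulEnd_lie_momentum hV)
      (mulEnd_lie_mulEnd hV contDiff_id) (mulEnd_lie_mulEnd _ contDiff_id)]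
  -- `momentum`, `position` and `mulEnd f` act on `u` by `pOp`, `qOp` and `mulOp f` definitionally
  rfl

/-- `𝓛(X) = −2(2γr − 1)p² − 2ω²q² + (s − 2γ − ω²r)(pq+qp)
− r(pV′(q) + V′(q)p) − 2qV′(q) + (2rD_pp + 4D_pq + 2sD_qq)` on `C_c^∞(ℝ,ℂ)`. -/
theorem LindV_of_X (ω γ Dpp Dqq Dpq r s : ℝ) (hω : 0 < ω)
    (V : ℝ → ℝ) (hV : ContDiff ℝ (⊤ : ℕ∞) V)
    (u : ℝ → ℂ) (hu : IsTest u) :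
    LindV ω γ Dpp Dqq Dpq V (Xop r s) u =
      ((-2*(2*γ*r - 1) : ℝ) : ℂ) • pOp (pOp u)
      + ((-2*ω^2 : ℝ) : ℂ) • qOp (qOp u)
      + ((s - 2*γ - ω^2*r : ℝ) : ℂ) • opACom pOp qOp u
      + (-(r : ℂ)) • (pOp (mulOp (deriv V) u) + mulOp (deriv V) (pOp u))
      + ((-2 : ℝ) : ℂ) • qOp (mulOp (deriv V) u)
      + ((2*r*Dpp + 4*Dpq + 2*s*Dqq : ℝ) : ℂ) • u :=
  LindV_of_X_general ω γ Dpp Dqq Dpq r s V hV u hu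
end
end

section
/- Let ω > 0, γ > 0 and let D_pp, D_qq ≥ 0 and D_pq be real numbers satisfying the Lindblad condition D_pp D_qq − D_pq² − γ²/4 ≥ 0. Define Q₁₁ = D_pp + ω² D_qq, Q₁₂ = 2ωγ D_qq, Q₂₂ = D_pp + ω² D_qq + 4γ(D_pq + γ D_qq), and Q = Q₁₁ Q₂₂ − Q₁₂². Then Q = γ² ω² if and only if all of the following hold: γ < ω, D_pp D_qq − D_pq² − γ²/4 = 0, D_pq = −γ D_qq, and D_pp = ω² D_qq. -/
set_option maxHeartbeats 1000000 in
/-- with `Q₁₁ = D_pp + ω²D_qq`, `Q₁₂ = 2ωγD_qq`,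
`Q₂₂ = D_pp + ω²D_qq + 4γ(D_pq + γD_qq)`, `Q = Q₁₁Q₂₂ − Q₁₂²`, one has `Q = γ²ω²`
iff `γ < ω`, `D_pp D_qq − D_pq² − γ²/4 = 0`, `D_pq = −γD_qq` and `D_pp = ω²D_qq`. -/
theorem pure_steady_state_characterization (ω γ Dpp Dqq Dpq : ℝ)
    (hω : 0 < ω) (hγ : 0 < γ) (hpp : 0 ≤ Dpp) (hqq : 0 ≤ Dqq)
    (hlind : 0 ≤ Dpp*Dqq - Dpq^2 - γ^2/4) :
    (Dpp + ω^2*Dqq) * (Dpp + ω^2*Dqq + 4*γ*(Dpq + γ*Dqq)) - (2*ω*γ*Dqq)^2 = γ^2*ω^2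
    ↔ (γ < ω ∧ Dpp*Dqq - Dpq^2 - γ^2/4 = 0 ∧ Dpq = -γ*Dqq ∧ Dpp = ω^2*Dqq) := by
  constructor
  · intro hQ
    have ht : 0 < Dqq := by
      rcases lt_or_eq_of_le hqq with h | h
      · exact h
      · exfalso; nlinarith [sq_nonneg Dpq, sq_nonneg γ]
    have hlt : γ < ω := by
      by_contra hge
      push_neg at hge
      have hP : (γ^2+ω^2)*Dqq^2 + (Dpq+γ*Dqq)^2 + γ^2/4
          ≤ Dqq*(Dpp + ω^2*Dqq + 2*γ*Dpq + 2*γ^2*Dqq) := by nlinarith [hlind]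
      have hPpos : (0:ℝ) < (γ^2+ω^2)*Dqq^2 + (Dpq+γ*Dqq)^2 + γ^2/4 := by positivity
      have hsq : ((γ^2+ω^2)*Dqq^2 + (Dpq+γ*Dqq)^2 + γ^2/4)^2
          ≤ (Dqq*(Dpp + ω^2*Dqq + 2*γ*Dpq + 2*γ^2*Dqq))^2 :=
        pow_le_pow_left₀ (le_of_lt hPpos) hP 2
      have hMval : (Dqq*(Dpp + ω^2*Dqq + 2*γ*Dpq + 2*γ^2*Dqq))^2
          = Dqq^2 * (γ^2*(ω^2 + 4*(Dpq+γ*Dqq)^2 + 4*ω^2*Dqq^2)) := by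
        linear_combination Dqq^2 * hQ
      have hc : 0 ≤ γ^2 - ω^2 := by nlinarith
      have hid : ((γ^2+ω^2)*Dqq^2 + (Dpq+γ*Dqq)^2 + γ^2/4)^2
          - Dqq^2 * (γ^2*(ω^2 + 4*(Dpq+γ*Dqq)^2 + 4*ω^2*Dqq^2))
          = ((γ^2-ω^2)*Dqq^2 - (Dpq+γ*Dqq)^2 - γ^2/4)^2 + (γ^2-ω^2)*γ^2*Dqq^2 := by
        ring
      have h5 : ((γ^2-ω^2)*Dqq^2 - (Dpq+γ*Dqq)^2 - γ^2/4)^2 + (γ^2-ω^2)*γ^2*Dqq^2 ≤ 0 := by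
        linarith
      nlinarith [h5, sq_nonneg ((γ^2-ω^2)*Dqq^2 - (Dpq+γ*Dqq)^2),
        mul_nonneg (mul_nonneg hc (sq_nonneg Dqq)) (sq_nonneg γ),
        mul_nonneg (sq_nonneg (Dpq+γ*Dqq)) (sq_nonneg γ),
        pow_pos hγ 4]
    have key : (Dpp - ω^2*Dqq + 2*γ*(Dpq+γ*Dqq))^2 + 4*(ω^2-γ^2)*(Dpq+γ*Dqq)^2
        + 4*ω^2*(Dpp*Dqq - Dpq^2 - γ^2/4) = 0 := by
      linear_combination hQ
    have hc2 : 0 < ω^2 - γ^2 := by nlinarith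
    have h4B : 4*(ω^2-γ^2)*(Dpq+γ*Dqq)^2 = 0 := by
      have h1 : 0 ≤ 4*(ω^2-γ^2)*(Dpq+γ*Dqq)^2 := by positivity
      have h2 : 4*(ω^2-γ^2)*(Dpq+γ*Dqq)^2 ≤ 0 := by
        nlinarith [sq_nonneg (Dpp - ω^2*Dqq + 2*γ*(Dpq+γ*Dqq)),
          mul_nonneg (sq_nonneg ω) hlind]
      linarith
    have hB : Dpq + γ*Dqq = 0 := by
      have hne : (4*(ω^2-γ^2) : ℝ) ≠ 0 := by positivity
      have := (mul_eq_zero.mp h4B).resolve_left hne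
      exact pow_eq_zero_iff (two_ne_zero) |>.mp this
    have hL : Dpp*Dqq - Dpq^2 - γ^2/4 = 0 := by
      have h2 : ω^2*(Dpp*Dqq - Dpq^2 - γ^2/4) = 0 := by
        nlinarith [sq_nonneg (Dpp - ω^2*Dqq + 2*γ*(Dpq+γ*Dqq)),
          mul_nonneg (sq_nonneg ω) hlind]
      exact (mul_eq_zero.mp h2).resolve_left (by positivity)
    have hA : Dpp = ω^2*Dqq := by
      have h1 : (Dpp - ω^2*Dqq + 2*γ*(Dpq+γ*Dqq))^2 = 0 := by
        nlinarith [mul_nonneg hc2.le (sq_nonneg (Dpq+γ*Dqq))]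
      have h2 := pow_eq_zero_iff (two_ne_zero) |>.mp h1
      rw [hB] at h2; linarith
    exact ⟨hlt, hL, by linarith, hA⟩
  · rintro ⟨hlt, hL, h3, h4⟩
    subst h3 h4
    linear_combination 4*ω^2*hL
end

section
/- Let ω > 0, γ > 0 with γ < ω, set β = √(ω² − γ²), D_qq = γ/(2β), D_pq = −γ D_qq, D_pp = ω² D_qq, and c = (β + iγ)/2. Let L₁ be the operator (L₁ u)(x) = ((−2D_pq + iγ)/√(2D_pp)) · (−i u′(x)) + √(2D_pp) · x u(x). Then the Gaussian u(x) = exp(−c x²) satisfies (L₁ u)(x) = 0 for all x ∈ ℝ, i.e. u lies in the kernel of the Lindblad operator L₁. -/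
/-!
Since `u(x) = exp(-c x²)` satisfies `u' = -2 c x u`, the operator `a p + b q` maps `u` to
`(2 i a c + b) x u`, so `u` lies in its kernel exactly when `2 i a c + b = 0`. For `L₁` this
is the identity `(γ²/β + i γ) · i (β + i γ) = -γ ω²/β = -2 D_pp`, which is `β² + γ² = ω²`.
-/

open Complex

theorem hasDerivAt_cexp_neg_mul_sq (c : ℂ) (x : ℝ) :
    HasDerivAt (fun t : ℝ => cexp (-c * (t : ℂ) ^ 2))
      (-2 * c * x * cexp (-c * (x : ℂ) ^ 2)) x := by
  have hquad : HasDerivAt (fun z : ℂ => -c * z ^ 2) (-2 * c * x) (x : ℂ) := by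
    simpa [mul_comm, mul_left_comm, mul_assoc] using (hasDerivAt_pow 2 (x : ℂ)).const_mul (-c)
  simpa [mul_comm] using hquad.cexp.comp_ofReal

theorem momentum_add_position_apply_gaussian (a b c : ℂ) (x : ℝ) :
    a * (-I * deriv (fun t : ℝ => cexp (-c * (t : ℂ) ^ 2)) x) + b * x * cexp (-c * (x : ℂ) ^ 2)
      = (a * (2 * I * c) + b) * x * cexp (-c * (x : ℂ) ^ 2) := by
  rw [(hasDerivAt_cexp_neg_mul_sq c x).deriv]
  ring

theorem div_mul_add_eq_zero_of_mul_eq_neg_sq {A k s : ℂ} (h : A * k = -s ^ 2) :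
    A / s * k + s = 0 := by
  rcases eq_or_ne s 0 with rfl | hs
  · simp
  · field_simp
    linear_combination h

theorem gaussian_in_kernel_L1_general (ω γ β Dqq Dpq Dpp : ℝ) (c : ℂ)
    (hγ : 0 < γ) (hγω : γ < ω)
    (hβ : β = Real.sqrt (ω^2 - γ^2))
    (hDqq : Dqq = γ / (2*β)) (hDpq : Dpq = -γ*Dqq) (hDpp : Dpp = ω^2*Dqq)
    (hc : c = ((β : ℂ) + Complex.I * (γ : ℂ))/2) :
    ∀ x : ℝ,
      (((-2*Dpq : ℝ) : ℂ) + Complex.I * (γ : ℂ)) / ((Real.sqrt (2*Dpp) : ℝ) : ℂ)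
          * (-Complex.I * deriv (fun t : ℝ => Complex.exp (-c * (t : ℂ)^2)) x)
        + ((Real.sqrt (2*Dpp) : ℝ) : ℂ) * (x : ℂ) * Complex.exp (-c * (x : ℂ)^2) = 0 := by
  intro x
  have hβsq : β ^ 2 = ω ^ 2 - γ ^ 2 := by
    rw [hβ, Real.sq_sqrt]
    nlinarith
  have hβpos : 0 < β := by
    rw [hβ]
    exact Real.sqrt_pos.mpr (by nlinarith)
  have hsq : ((Real.sqrt (2 * Dpp) : ℝ) : ℂ) ^ 2 = ((2 * Dpp : ℝ) : ℂ) := by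
    rw [← ofReal_pow, Real.sq_sqrt (by rw [hDpp, hDqq]; positivity)]
  have hcoeff : (((-2 * Dpq : ℝ) : ℂ) + I * γ) * (2 * I * c)
      = -((Real.sqrt (2 * Dpp) : ℝ) : ℂ) ^ 2 := by
    have hβ0 : (β : ℂ) ≠ 0 := ofReal_ne_zero.mpr hβpos.ne'
    have hω : (ω : ℂ) ^ 2 = β ^ 2 + γ ^ 2 := by
      exact_mod_cast (by linarith : ω ^ 2 = β ^ 2 + γ ^ 2)
    rw [hsq, hc, hDpp, hDpq, hDqq]
    push_cast
    rw [hω]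
    field_simp
    linear_combination (γ * β ^ 2 + γ ^ 2 * I * β + γ ^ 3 : ℂ) * I_sq
  rw [momentum_add_position_apply_gaussian, div_mul_add_eq_zero_of_mul_eq_neg_sq hcoeff,
    zero_mul, zero_mul]

/-- in the limiting case `Δ = 0`, `D_pq = −γD_qq`, `D_pp = ω²D_qq`,
`D_qq = γ/(2β)` with `β = √(ω² − γ²)`, the Gaussian `u(x) = exp(−c x²)` with
`c = (β + iγ)/2` lies in the kernel of `L₁`. -/
theorem gaussian_in_kernel_L1 (ω γ β Dqq Dpq Dpp : ℝ) (c : ℂ)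
    (hω : 0 < ω) (hγ : 0 < γ) (hγω : γ < ω)
    (hβ : β = Real.sqrt (ω^2 - γ^2))
    (hDqq : Dqq = γ / (2*β)) (hDpq : Dpq = -γ*Dqq) (hDpp : Dpp = ω^2*Dqq)
    (hc : c = ((β : ℂ) + Complex.I * (γ : ℂ))/2) :
    ∀ x : ℝ,
      (((-2*Dpq : ℝ) : ℂ) + Complex.I * (γ : ℂ)) / ((Real.sqrt (2*Dpp) : ℝ) : ℂ)
          * (-Complex.I * deriv (fun t : ℝ => Complex.exp (-c * (t : ℂ)^2)) x)
        + ((Real.sqrt (2*Dpp) : ℝ) : ℂ) * (x : ℂ) * Complex.exp (-c * (x : ℂ)^2) = 0 :=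
  gaussian_in_kernel_L1_general ω γ β Dqq Dpq Dpp c hγ hγω hβ hDqq hDpq hDpp hc
end
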